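/- Let ρ and σ be density matrices on Fin n and let ε ∈ [0, 1 − ½‖ρ − σ‖₁). Then D_h^ε(ρ‖σ) ≤ −log₂ (1 − ½‖ρ − σ‖₁ − ε). Equivalently, every test Λ with Re Tr[Λ·ρ] ≥ 1 − ε satisfies Re Tr[Λ·σ] ≥ 1 − ½‖ρ − σ‖₁ − ε. -/

import Mathlib

open Matrix Kronecker
open scoped ComplexOrder

open scoped Classical in
noncomputable def matSqrt {n : Type*} [Fintype n] [DecidableEq n] (A : Matrix n n ℂ) :
    Matrix n n ℂ :=
  if h : A.PosSemidef then
    (h.1.eigenvectorUnitary : Matrix n n ℂ) *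
      Matrix.diagonal (fun i => ((Real.sqrt (h.1.eigenvalues i) : ℝ) : ℂ)) *
      (star h.1.eigenvectorUnitary : Matrix n n ℂ)
  else 0

noncomputable def rootFidelity {n : Type*} [Fintype n] [DecidableEq n]
    (ρ σ : Matrix n n ℂ) : ℝ :=
  (matSqrt (matSqrt σ * ρ * matSqrt σ)).trace.re

noncomputable def fidelity {n : Type*} [Fintype n] [DecidableEq n]
    (ρ σ : Matrix n n ℂ) : ℝ :=
  (rootFidelity ρ σ) ^ 2

noncomputable def traceNorm {n : Type*} [Fintype n] [DecidableEq n] (A : Matrix n n ℂ) : ℝ :=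
  (matSqrt (Aᴴ * A)).trace.re

/-- The set of attainable type-II error values in hypothesis testing. -/
def testValues {n : Type*} [Fintype n] [DecidableEq n] (ρ σ : Matrix n n ℂ) (ε : ℝ) :
    Set ℝ :=
  { x | ∃ Λ : Matrix n n ℂ, Λ.PosSemidef ∧ (1 - Λ).PosSemidef ∧
      1 - ε ≤ (Λ * ρ).trace.re ∧ x = (Λ * σ).trace.re }

/-- ε-hypothesis-testing relative entropy. -/
noncomputable def Dh {n : Type*} [Fintype n] [DecidableEq n]
    (ρ σ : Matrix n n ℂ) (ε : ℝ) : ℝ :=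
  - Real.logb 2 (sInf (testValues ρ σ ε))

/-- GHZ unit vector. -/
noncomputable def ghz (M K : ℕ) : (Fin M → Fin K) → ℂ :=
  fun f => if ∃ c, ∀ m, f m = c then ((Real.sqrt K : ℂ))⁻¹ else 0

/-- GHZ rank-one projection. -/
noncomputable def ghzProj (M K : ℕ) : Matrix (Fin M → Fin K) (Fin M → Fin K) ℂ :=
  Matrix.vecMulVec (ghz M K) (star ∘ ghz M K)

/-- The twisting unitary. -/
def twist (M K d : ℕ)
    (U : (Fin M → Fin K) → Matrix (Fin M → Fin d) (Fin M → Fin d) ℂ) :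
    Matrix ((Fin M → Fin K) × (Fin M → Fin d)) ((Fin M → Fin K) × (Fin M → Fin d)) ℂ :=
  Matrix.of fun p q => if p.1 = q.1 then U p.1 p.2 q.2 else 0

/-- The privacy test `Π = W (Φ ⊗ 1) Wᴴ`. -/
noncomputable def privacyTest (M K d : ℕ)
    (U : (Fin M → Fin K) → Matrix (Fin M → Fin d) (Fin M → Fin d) ℂ) :
    Matrix ((Fin M → Fin K) × (Fin M → Fin d)) ((Fin M → Fin K) × (Fin M → Fin d)) ℂ :=
  twist M K d U * (ghzProj M K ⊗ₖ (1 : Matrix (Fin M → Fin d) (Fin M → Fin d) ℂ)) *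
    (twist M K d U)ᴴ

/-- The private state `γ = W (Φ ⊗ ω) Wᴴ`. -/
noncomputable def privateState (M K d : ℕ)
    (U : (Fin M → Fin K) → Matrix (Fin M → Fin d) (Fin M → Fin d) ℂ)
    (ω : Matrix (Fin M → Fin d) (Fin M → Fin d) ℂ) :
    Matrix ((Fin M → Fin K) × (Fin M → Fin d)) ((Fin M → Fin K) × (Fin M → Fin d)) ℂ :=
  twist M K d U * (ghzProj M K ⊗ₖ ω) * (twist M K d U)ᴴ

/-- A vector on `𝒦 × 𝒮` is product across the bipartition `J | Jᶜ` of the parties. -/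
def IsProductAcross {M K d : ℕ} (J : Set (Fin M))
    (v : (Fin M → Fin K) × (Fin M → Fin d) → ℂ) : Prop :=
  ∃ (v₁ : ((↥J) → Fin K) × ((↥J) → Fin d) → ℂ)
    (v₂ : ((↥(Jᶜ)) → Fin K) × ((↥(Jᶜ)) → Fin d) → ℂ),
    ∀ (f : Fin M → Fin K) (x : Fin M → Fin d),
      v (f, x) = v₁ (fun m => f m.1, fun m => x m.1) * v₂ (fun m => f m.1, fun m => x m.1)

/-- Biseparability: a finite convex combination of pure states, each product across
some nontrivial bipartition of the parties. -/
def Biseparable {M K d : ℕ}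
    (σ : Matrix ((Fin M → Fin K) × (Fin M → Fin d))
      ((Fin M → Fin K) × (Fin M → Fin d)) ℂ) : Prop :=
  ∃ (N : ℕ) (p : Fin N → ℝ) (w : Fin N → ((Fin M → Fin K) × (Fin M → Fin d)) → ℂ)
    (J : Fin N → Set (Fin M)),
    (∀ t, 0 ≤ p t) ∧ (∑ t, p t = 1) ∧
    (∀ t, ∑ i, ‖w t i‖ ^ 2 = 1) ∧
    (∀ t, J t ≠ ∅ ∧ J t ≠ Set.univ ∧ IsProductAcross (J t) (w t)) ∧
    σ = ∑ t, (p t : ℂ) • Matrix.vecMulVec (w t) (star ∘ w t)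

/-- Partial trace over the second tensor factor. -/
noncomputable def partialTrace₂ {A B : Type*} [Fintype B] (τ : Matrix (A × B) (A × B) ℂ) :
    Matrix A A ℂ :=
  Matrix.of fun a a' => ∑ b, τ (a, b) (a', b)

/-- Matrix logarithm of a Hermitian matrix via the spectral functional calculus. -/
noncomputable def matLog {n : Type*} [Fintype n] [DecidableEq n] (A : Matrix n n ℂ) :
    Matrix n n ℂ :=
  if hA : A.IsHermitian then
    (hA.eigenvectorUnitary : Matrix n n ℂ) *
      Matrix.diagonal (fun i => (Real.log (hA.eigenvalues i) : ℂ)) *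
      (star hA.eigenvectorUnitary : Matrix n n ℂ)
  else 0

/-! For a test `Λ` and a Hermitian `A = A⁺ - A⁻`, both `(1 - Λ) A⁺` and `Λ A⁻` have nonnegative
trace, so `Re Tr[Λ A] ≤ Tr A⁺ = (‖A‖₁ + Tr A) / 2`. For the traceless `A = ρ - σ` this gives
`Re Tr[Λ σ] ≥ Re Tr[Λ ρ] - ½‖ρ - σ‖₁`, and the bound on `D_h^ε` follows by passing to the
infimum over tests. -/

open scoped MatrixOrder

section TraceNorm

variable {n : Type*} [Fintype n]

lemma Matrix.PosSemidef.re_trace_nonneg {A : Matrix n n ℂ} (hA : A.PosSemidef) :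
    0 ≤ A.trace.re :=
  (Complex.nonneg_iff.mp hA.trace_nonneg).1

variable [DecidableEq n]

lemma matSqrt_eq_cfcSqrt {A : Matrix n n ℂ} (hA : A.PosSemidef) : matSqrt A = CFC.sqrt A := by
  rw [matSqrt, dif_pos hA, CFC.sqrt_eq_real_sqrt _ hA.nonneg,
    cfcₙ_eq_cfc (hf := Real.continuous_sqrt.continuousOn) (hf0 := Real.sqrt_zero),
    hA.1.cfc_eq, IsHermitian.cfc, Unitary.conjStarAlgAut_apply]
  rfl

lemma traceNorm_eq_re_trace_cfcAbs (A : Matrix n n ℂ) : traceNorm A = (CFC.abs A).trace.re := by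
  rw [traceNorm, matSqrt_eq_cfcSqrt (posSemidef_conjTranspose_mul_self A)]
  rfl

lemma Matrix.PosSemidef.re_trace_mul_nonneg {A B : Matrix n n ℂ} (hA : A.PosSemidef)
    (hB : B.PosSemidef) : 0 ≤ (A * B).trace.re := by
  have hsqrt : (CFC.sqrt A)ᴴ = CFC.sqrt A := (CFC.sqrt_nonneg A).posSemidef.1.eq
  have := (hB.conjTranspose_mul_mul_same (CFC.sqrt A)).re_trace_nonneg
  rwa [hsqrt, trace_mul_cycle, CFC.sqrt_mul_sqrt_self A hA.nonneg] at this

lemma Matrix.IsHermitian.two_mul_re_trace_posPart {A : Matrix n n ℂ} (hA : A.IsHermitian) :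
    2 * (A⁺).trace.re = traceNorm A + A.trace.re := by
  have hA' : IsSelfAdjoint A := hA
  rw [traceNorm_eq_re_trace_cfcAbs, ← Complex.add_re, ← trace_add, CFC.abs_add_self A, two_smul,
    trace_add, Complex.add_re, two_mul]

lemma Matrix.PosSemidef.two_mul_re_trace_mul_le {Λ A : Matrix n n ℂ} (hΛ : Λ.PosSemidef)
    (hΛ₁ : (1 - Λ).PosSemidef) (hA : A.IsHermitian) :
    2 * (Λ * A).trace.re ≤ traceNorm A + A.trace.re := by
  have hA' : IsSelfAdjoint A := hA
  have hneg : 0 ≤ (Λ * A⁻).trace.re := hΛ.re_trace_mul_nonneg (CFC.negPart_nonneg A).posSemidef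
  have hpos : 0 ≤ ((1 - Λ) * A⁺).trace.re :=
    hΛ₁.re_trace_mul_nonneg (CFC.posPart_nonneg A).posSemidef
  have hsplit : Λ * A = A⁺ - (1 - Λ) * A⁺ - Λ * A⁻ := by
    conv_lhs => rw [← CFC.posPart_sub_negPart A]
    noncomm_ring
  rw [← hA.two_mul_re_trace_posPart, hsplit, trace_sub, trace_sub, Complex.sub_re, Complex.sub_re]
  linarith

end TraceNorm

section HypothesisTesting

variable {n : Type*} [Fintype n] [DecidableEq n]

lemma re_trace_mul_sub_le_of_test {Λ ρ σ : Matrix n n ℂ} (hΛ : Λ.PosSemidef)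
    (hΛ₁ : (1 - Λ).PosSemidef) (hρ : ρ.IsHermitian) (hσ : σ.IsHermitian) (htr : ρ.trace = σ.trace) :
    (Λ * ρ).trace.re - traceNorm (ρ - σ) / 2 ≤ (Λ * σ).trace.re := by
  have h := hΛ.two_mul_re_trace_mul_le hΛ₁ (hρ.sub hσ)
  rw [trace_sub, htr, sub_self, Complex.zero_re, add_zero, mul_sub, trace_sub, Complex.sub_re] at h
  linarith

lemma trace_mem_testValues {ρ σ : Matrix n n ℂ} {ε : ℝ} (h : 1 - ε ≤ ρ.trace.re) :
    σ.trace.re ∈ testValues ρ σ ε :=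
  ⟨1, .one, by simpa using PosSemidef.zero, by rwa [one_mul], by rw [one_mul]⟩

lemma Dh_le_neg_logb_of_forall_le {ρ σ : Matrix n n ℂ} {ε c : ℝ} (hc : 0 < c)
    (hne : (testValues ρ σ ε).Nonempty) (hle : ∀ x ∈ testValues ρ σ ε, c ≤ x) :
    Dh ρ σ ε ≤ - Real.logb 2 c :=
  neg_le_neg (Real.logb_le_logb_of_le one_lt_two hc (le_csInf hne hle))

end HypothesisTesting

/-- `D_h^ε(ρ‖σ) ≤ −log₂(1 − ½‖ρ−σ‖₁ − ε)`, equivalently every test `Λ`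
with `Re Tr[Λρ] ≥ 1 − ε` satisfies `Re Tr[Λσ] ≥ 1 − ½‖ρ−σ‖₁ − ε`. -/
theorem stmt_7 (n : ℕ) (ρ σ : Matrix (Fin n) (Fin n) ℂ)
    (hρ : ρ.PosSemidef) (hρtr : ρ.trace = 1)
    (hσ : σ.PosSemidef) (hσtr : σ.trace = 1)
    (ε : ℝ) (hε0 : 0 ≤ ε) (hε1 : ε < 1 - traceNorm (ρ - σ) / 2) :
    Dh ρ σ ε ≤ - Real.logb 2 (1 - traceNorm (ρ - σ) / 2 - ε) ∧
    ∀ Λ : Matrix (Fin n) (Fin n) ℂ, Λ.PosSemidef → (1 - Λ).PosSemidef →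
      1 - ε ≤ (Λ * ρ).trace.re →
      1 - traceNorm (ρ - σ) / 2 - ε ≤ (Λ * σ).trace.re := by
  have htest : ∀ Λ : Matrix (Fin n) (Fin n) ℂ, Λ.PosSemidef → (1 - Λ).PosSemidef →
      1 - ε ≤ (Λ * ρ).trace.re → 1 - traceNorm (ρ - σ) / 2 - ε ≤ (Λ * σ).trace.re :=
    fun Λ hΛ hΛ₁ hΛρ ↦ by
      linarith [re_trace_mul_sub_le_of_test hΛ hΛ₁ hρ.1 hσ.1 (hρtr.trans hσtr.symm)]
  refine ⟨Dh_le_neg_logb_of_forall_le (by linarith) ⟨_, trace_mem_testValues ?_⟩ ?_, htest⟩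
  · simpa [hρtr] using hε0
  · rintro x ⟨Λ, hΛ, hΛ₁, hΛρ, rfl⟩
    exact htest Λ hΛ hΛ₁ hΛρ
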